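/- Assume Conjectures 1(2) and 2, and fix a prime p. Then the following are equivalent: (i) for every n ≥ 1 and every integral domain R of characteristic zero, every Keller map in ME_n(R) is invertible over R; (ii) for every n ≥ 1 and every field K of characteristic p, every strong Keller map in ME_n(K) is invertible over K. -/

import Mathlib

open MvPolynomial

noncomputable section

/-- The total degree `|α|` of a multi-index `α`. -/
def mdeg {n : ℕ} (α : Fin n →₀ ℕ) : ℕ := α.sum fun _ e => e

/-- The determinant of the Jacobian matrix `(∂F_i/∂x_j)` of a polynomial endomorphism. -/
def jacDet {n : ℕ} {R : Type*} [CommRing R] (F : Fin n → MvPolynomial (Fin n) R) :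
    MvPolynomial (Fin n) R :=
  (Matrix.of fun i j => MvPolynomial.pderiv j (F i)).det

/-- `F` has degree at most `d`. -/
def DegLE {n : ℕ} {R : Type*} [CommRing R] (F : Fin n → MvPolynomial (Fin n) R) (d : ℕ) : Prop :=
  ∀ i, (F i).totalDegree ≤ d

/-- `F` has affine part the identity: `F_i = x_i + (terms of degree ≥ 2)`. -/
def AffinePartId {n : ℕ} {R : Type*} [CommRing R] (F : Fin n → MvPolynomial (Fin n) R) : Prop :=
  ∀ (i : Fin n) (α : Fin n →₀ ℕ), mdeg α ≤ 1 →
    MvPolynomial.coeff α (F i) = MvPolynomial.coeff α (MvPolynomial.X i : MvPolynomial (Fin n) R)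

/-- `F` is an invertible polynomial map: there is `G` with `F∘G = G∘F = id`. -/
def IsInvertible {n : ℕ} {R : Type*} [CommRing R] (F : Fin n → MvPolynomial (Fin n) R) : Prop :=
  ∃ G : Fin n → MvPolynomial (Fin n) R,
    (∀ i, MvPolynomial.bind₁ G (F i) = MvPolynomial.X i) ∧
    (∀ i, MvPolynomial.bind₁ F (G i) = MvPolynomial.X i)

/-- Index type of the universal coefficients `c_{i,α}`, `1 ≤ i ≤ n`, `2 ≤ |α| ≤ d`. -/
abbrev Idx (n d : ℕ) : Type := Fin n × {α : Fin n →₀ ℕ // 2 ≤ mdeg α ∧ mdeg α ≤ d}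

/-- The finite set of multi-indices `α` with `2 ≤ |α| ≤ d`. -/
def midxSet (n d : ℕ) : Finset (Fin n →₀ ℕ) :=
  (Finset.Iic (Finsupp.equivFunOnFinite.symm fun _ : Fin n => d)).filter
    fun α => 2 ≤ mdeg α ∧ mdeg α ≤ d

/-- The universal degree-`d` endomorphism with affine part identity, written over
`C_{ℤ,d} = ℤ[c_{i,α}]`. -/
def univFZ (n d : ℕ) : Fin n → MvPolynomial (Fin n) (MvPolynomial (Idx n d) ℤ) :=
  fun i => MvPolynomial.X i +
    ∑ α ∈ (midxSet n d).attach,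
      MvPolynomial.monomial (α : Fin n →₀ ℕ)
        (MvPolynomial.X (⟨i, ⟨α.1, by
          have h := α.2
          simp only [midxSet, Finset.mem_filter] at h
          exact h.2⟩⟩ : Idx n d))

/-- The coefficients `E_β ∈ C_{ℤ,d}` of `det(Jac(F[d])) − 1 = Σ_β E_β x^β`. -/
def Ecoef (n d : ℕ) (β : Fin n →₀ ℕ) : MvPolynomial (Idx n d) ℤ :=
  MvPolynomial.coeff β (jacDet (univFZ n d) - 1)

/-- The inclusion `C_{ℤ,d} → C_{ℚ,d}`. -/
def toQ (n d : ℕ) : MvPolynomial (Idx n d) ℤ →+* MvPolynomial (Idx n d) ℚ :=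
  MvPolynomial.map (Int.castRingHom ℚ)

/-- The ideal `I_ℚ^d ⊆ C_{ℚ,d}` generated by the coefficients `E_β`. -/
def Iqd (n d : ℕ) : Ideal (MvPolynomial (Idx n d) ℚ) :=
  Ideal.span (Set.range fun β : Fin n →₀ ℕ => toQ n d (Ecoef n d β))

/-- `J_ℤ^d := rad(I_ℚ^d) ∩ C_{ℤ,d}` as the contraction of the radical to `C_{ℤ,d}`. -/
def Jzd (n d : ℕ) : Ideal (MvPolynomial (Idx n d) ℤ) :=
  Ideal.comap (toQ n d) (Iqd n d).radical

/-- `ψ_F : C_{ℤ,d} → R`, evaluating `c_{i,α}` at the coefficient of `x^α` in `F_i`. -/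
def psi {n : ℕ} (d : ℕ) {R : Type*} [CommRing R] (F : Fin n → MvPolynomial (Fin n) R) :
    MvPolynomial (Idx n d) ℤ →+* R :=
  MvPolynomial.eval₂Hom (Int.castRingHom R) fun v => MvPolynomial.coeff v.2.1 (F v.1)

/-- `F` is a strong Keller map (w.r.t. degree bound `d`): `ψ_F` vanishes on `J_ℤ^d`. -/
def IsSKE (n d : ℕ) {R : Type*} [CommRing R] (F : Fin n → MvPolynomial (Fin n) R) : Prop :=
  ∀ Q ∈ Jzd n d, psi d F Q = 0

/-- `F` is a strong Keller map: for some degree bound `d ≥ 2` of `F`,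
`ψ_F` vanishes on `J_ℤ^d`. -/
def IsSKEAll (n : ℕ) {R : Type*} [CommRing R] (F : Fin n → MvPolynomial (Fin n) R) : Prop :=
  ∃ d, 2 ≤ d ∧ DegLE F d ∧ IsSKE n d F


/-- **Conjecture 1(1).** For every ℤ-algebra `R`, field `k` and surjective `τ : R → k`,
every invertible polynomial map over `k` with Jacobian determinant 1 lifts along `π` to an
invertible polynomial map over `R` with Jacobian determinant 1. -/
def Conj1_1 : Prop :=
  ∀ (n : ℕ), 1 ≤ n →
  ∀ (R : Type) [CommRing R], ∀ (k : Type) [Field k],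
  ∀ (τ : R →+* k), Function.Surjective τ →
  ∀ f : Fin n → MvPolynomial (Fin n) k, IsInvertible f → jacDet f = 1 →
    ∃ F : Fin n → MvPolynomial (Fin n) R, IsInvertible F ∧ jacDet F = 1 ∧
      ∀ i, MvPolynomial.map τ (F i) = f i

/-- **Conjecture 1(2).** For every ℤ-algebra `R`, field `k` and surjective `τ : R → k`,
every Keller map `F` over `R` whose image `π(F)` is invertible over `k` with Jacobian
determinant 1 is itself invertible over `R`. -/
def Conj1_2 : Prop :=
  ∀ (n : ℕ), 1 ≤ n →
  ∀ (R : Type) [CommRing R], ∀ (k : Type) [Field k],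
  ∀ (τ : R →+* k), Function.Surjective τ →
  ∀ F : Fin n → MvPolynomial (Fin n) R, jacDet F = 1 →
    IsInvertible (fun i => MvPolynomial.map τ (F i)) →
    jacDet (fun i => MvPolynomial.map τ (F i)) = 1 →
    IsInvertible F

/-- **Conjecture 2.** For every ℤ-algebra `R`, field `k` of characteristic `p`, and
surjective `τ : R → k`, every strong Keller map over `k` with affine part identity is the
image under `π` of a polynomial map over `R` with affine part identity and Jacobian
determinant 1. -/
def Conj2 : Prop :=
  ∀ (n : ℕ), 1 ≤ n →
  ∀ (R : Type) [CommRing R], ∀ (k : Type) [Field k], ∀ (p : ℕ), p.Prime → CharP k p →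
  ∀ (τ : R →+* k), Function.Surjective τ →
  ∀ f : Fin n → MvPolynomial (Fin n) k, AffinePartId f → IsSKEAll n f →
    ∃ F : Fin n → MvPolynomial (Fin n) R, AffinePartId F ∧ jacDet F = 1 ∧
      ∀ i, MvPolynomial.map τ (F i) = f i

section AuxA
variable {n : ℕ} {R S : Type*} [CommRing R] [CommRing S]

lemma jacDet_map (f : R →+* S) (F : Fin n → MvPolynomial (Fin n) R) :
    jacDet (fun i => MvPolynomial.map f (F i)) = MvPolynomial.map f (jacDet F) := by
  unfold jacDet
  rw [RingHom.map_det]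
  congr 1
  ext i j
  simp [pderiv_map]

lemma isInvertible_map (f : R →+* S) {F : Fin n → MvPolynomial (Fin n) R}
    (h : IsInvertible F) : IsInvertible (fun i => MvPolynomial.map f (F i)) := by
  obtain ⟨G, h1, h2⟩ := h
  refine ⟨fun i => MvPolynomial.map f (G i), fun i => ?_, fun i => ?_⟩
  · rw [← map_bind₁, h1, map_X]
  · rw [← map_bind₁, h2, map_X]

lemma isInvertible_comp {F G : Fin n → MvPolynomial (Fin n) R}
    (hF : IsInvertible F) (hG : IsInvertible G) :
    IsInvertible (fun i => bind₁ G (F i)) := by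
  obtain ⟨F', hF1, hF2⟩ := hF
  obtain ⟨G', hG1, hG2⟩ := hG
  refine ⟨fun i => bind₁ F' (G' i), fun i => ?_, fun i => ?_⟩
  · rw [bind₁_bind₁]
    have h : (fun k => bind₁ (fun j => bind₁ F' (G' j)) (G k)) = F' := by
      funext k
      rw [← bind₁_bind₁, hG1, bind₁_X_right]
    rw [h, hF1]
  · rw [bind₁_bind₁]
    have h : (fun k => bind₁ (fun j => bind₁ G (F j)) (F' k)) = G := by
      funext k
      rw [← bind₁_bind₁, hF2, bind₁_X_right]
    rw [h, hG2]

lemma sum_matrix_mul (M N : Matrix (Fin n) (Fin n) R) (P : Fin n → MvPolynomial (Fin n) R)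
    (i : Fin n) :
    ∑ j, C (M i j) * (∑ k, C (N j k) * P k) = ∑ k, C ((M * N) i k) * P k := by
  simp only [Matrix.mul_apply, map_sum, Finset.sum_mul, Finset.mul_sum, ← mul_assoc, ← C_mul]
  exact Finset.sum_comm

lemma isInvertible_affine (A B : Matrix (Fin n) (Fin n) R) (hAB : A * B = 1) (hBA : B * A = 1)
    (a : Fin n → R) :
    IsInvertible (fun i => C (a i) + ∑ j, C (A i j) * X j) := by
  refine ⟨fun i => ∑ j, C (B i j) * (X j - C (a j)), fun i => ?_, fun i => ?_⟩
  · simp only [map_add, map_sum, map_mul, bind₁_C_right, bind₁_X_right]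
    rw [sum_matrix_mul A B (fun j => X j - C (a j)) i, hAB]
    simp [Matrix.one_apply, Finset.sum_ite_eq, apply_ite]
  · simp only [map_sum, map_mul, map_sub, bind₁_C_right, bind₁_X_right]
    have : ∀ j, (C (a j) + ∑ k, C (A j k) * X k) - C (a j) = ∑ k, C (A j k) * X k := by
      intro j; ring
    simp only [this]
    rw [sum_matrix_mul B A (fun j => (X j : MvPolynomial (Fin n) R)) i, hBA]
    simp [Matrix.one_apply, Finset.sum_ite_eq, apply_ite]

end AuxA
section AuxB
variable {n : ℕ} {R S : Type*} [CommRing R] [CommRing S]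

lemma apply_le_mdeg (α : Fin n →₀ ℕ) (i : Fin n) : α i ≤ mdeg α := by
  by_cases h : α i = 0
  · simp [h]
  · exact Finset.single_le_sum (fun _ _ => Nat.zero_le _) (Finsupp.mem_support_iff.2 h)

lemma mdeg_single (i : Fin n) (e : ℕ) : mdeg (Finsupp.single i e) = e := by
  by_cases h : e = 0
  · simp [h, mdeg]
  · simp [mdeg, Finsupp.sum, Finsupp.support_single_ne_zero _ h]

lemma mdeg_le_one_cases (α : Fin n →₀ ℕ) (h : mdeg α ≤ 1) :
    α = 0 ∨ ∃ k, α = Finsupp.single k 1 := by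
  by_cases h0 : α = 0
  · exact Or.inl h0
  right
  obtain ⟨k, hk⟩ : ∃ k, α k ≠ 0 := by
    by_contra hc
    push_neg at hc
    exact h0 (Finsupp.ext fun i => hc i)
  have hk1 : α k = 1 := le_antisymm (le_trans (apply_le_mdeg α k) h) (Nat.one_le_iff_ne_zero.2 hk)
  refine ⟨k, Finsupp.ext fun j => ?_⟩
  rcases eq_or_ne j k with rfl | hj
  · simp [hk1]
  · rw [Finsupp.single_apply, if_neg (by exact fun hc => hj hc.symm)]
    by_contra hc
    have hj1 : 1 ≤ α j := Nat.one_le_iff_ne_zero.2 hc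
    have : 2 ≤ mdeg α := by
      have : α k + α j ≤ mdeg α := by
        have := Finset.add_sum_erase α.support α (Finsupp.mem_support_iff.2 hk)
        calc α k + α j ≤ α k + ∑ x ∈ α.support.erase k, α x := by
              refine Nat.add_le_add_left ?_ _
              refine Finset.single_le_sum (fun _ _ => Nat.zero_le _) ?_
              exact Finset.mem_erase.2 ⟨hj, Finsupp.mem_support_iff.2 hc⟩
          _ = mdeg α := this
      omega
    omega

lemma constantCoeff_pderiv (j : Fin n) (f : MvPolynomial (Fin n) R) :
    constantCoeff (pderiv j f) = coeff (Finsupp.single j 1) f := by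
  induction f using MvPolynomial.induction_on' with
  | monomial α a =>
    rw [pderiv_monomial, coeff_monomial]
    rw [show constantCoeff (monomial (α - Finsupp.single j 1) (a * α j)) =
        coeff 0 (monomial (α - Finsupp.single j 1) (a * α j)) from rfl, coeff_monomial]
    by_cases h : α = Finsupp.single j 1
    · subst h; simp
    · rw [if_neg h]
      by_cases h2 : α - Finsupp.single j 1 = 0
      · have hle : α ≤ Finsupp.single j 1 := tsub_eq_zero_iff_le.1 h2
        have hαj : α j = 0 := by
          by_contra hc
          apply h
          have hαj1 : α j = 1 := le_antisymm (by simpa using hle j) (Nat.one_le_iff_ne_zero.2 hc)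
          refine Finsupp.ext fun i => ?_
          rcases eq_or_ne i j with rfl | hi
          · simpa using hαj1
          · have hji : j ≠ i := fun hc' => hi hc'.symm
            have h1 := hle i
            rw [Finsupp.single_apply, if_neg hji] at h1 ⊢
            omega
        simp [hαj]
      · rw [if_neg h2]
  | add f g hf hg => simp [hf, hg]

end AuxB
section AuxC
variable {n : ℕ} {R : Type*} [CommRing R]

lemma reduce_to_affineId (F : Fin n → MvPolynomial (Fin n) R) (hK : jacDet F = 1) :
    ∃ F' : Fin n → MvPolynomial (Fin n) R, AffinePartId F' ∧ jacDet F' = 1 ∧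
      (IsInvertible F' → IsInvertible F) := by
  classical
  set A : Matrix (Fin n) (Fin n) R :=
    Matrix.of fun i j => coeff (Finsupp.single j 1) (F i) with hA
  set a : Fin n → R := fun i => constantCoeff (F i) with ha
  have hdetA : A.det = 1 := by
    have h0 := congrArg (MvPolynomial.constantCoeff) hK
    rw [jacDet, RingHom.map_det] at h0
    have heq : constantCoeff.mapMatrix (Matrix.of fun i j => pderiv j (F i)) = A := by
      ext i j
      simp [constantCoeff_pderiv, hA]
    rw [heq] at h0
    simpa using h0
  set B : Matrix (Fin n) (Fin n) R := A.adjugate with hB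
  have hAB : A * B = 1 := by rw [hB, Matrix.mul_adjugate, hdetA, one_smul]
  have hBA : B * A = 1 := by rw [hB, Matrix.adjugate_mul, hdetA, one_smul]
  have hdetB : B.det = 1 := by
    rw [hB, Matrix.det_adjugate, hdetA, one_pow]
  set F' : Fin n → MvPolynomial (Fin n) R :=
    fun i => ∑ j, C (B i j) * (F j - C (a j)) with hF'
  refine ⟨F', ?_, ?_, ?_⟩
  · -- AffinePartId
    intro i α hα
    rcases mdeg_le_one_cases α hα with rfl | ⟨k, rfl⟩
    · rw [hF']
      simp only [coeff_sum, coeff_C_mul, coeff_sub]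
      rw [show coeff 0 (X i : MvPolynomial (Fin n) R) = 0 by simp]
      refine Finset.sum_eq_zero fun j _ => ?_
      rw [show (coeff 0 (F j) : R) = constantCoeff (F j) from rfl, coeff_C]
      simp [ha]
    · rw [hF']
      have hs0 : (Finsupp.single k 1 : Fin n →₀ ℕ) ≠ 0 := by
        intro h
        have := congrArg mdeg h
        simp [mdeg_single, mdeg] at this
      have hcoe : ∀ j, coeff (Finsupp.single k 1) (F j - C (a j)) = A j k := by
        intro j
        rw [coeff_sub, coeff_C, if_neg fun h => hs0 h.symm, sub_zero]
        rfl
      simp only [coeff_sum, coeff_C_mul, hcoe]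
      have hmm : ∑ j, B i j * A j k = (B * A) i k := (Matrix.mul_apply).symm
      rw [hmm, hBA, coeff_X', Matrix.one_apply]
      by_cases h : i = k
      · subst h; simp
      · rw [if_neg h, if_neg fun hc => h (Finsupp.single_left_injective one_ne_zero hc)]
  · -- jacDet
    have hJac : (Matrix.of fun i j => pderiv j (F' i)) =
        (C : R →+* MvPolynomial (Fin n) R).mapMatrix (B : Matrix (Fin n) (Fin n) R) *
          (Matrix.of fun i j => pderiv j (F i)) := by
      ext i k
      rw [hF']
      simp [Matrix.mul_apply, pderiv_C_mul]
    rw [jacDet, hJac, Matrix.det_mul, ← RingHom.map_det, hdetB, ← jacDet, hK]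
    simp
  · -- invertibility transfer
    intro hInv
    have hL := isInvertible_affine A B hAB hBA a
    have hcomp := isInvertible_comp hL hInv
    have hFL : (fun i => bind₁ F' (C (a i) + ∑ j, C (A i j) * X j)) = F := by
      funext i
      simp only [map_add, map_sum, map_mul, bind₁_C_right, bind₁_X_right]
      rw [hF', sum_matrix_mul A B (fun k => F k - C (a k)) i, hAB]
      simp [Matrix.one_apply, apply_ite]
    rwa [hFL] at hcomp

end AuxC
section AuxD
variable {n d : ℕ} {R : Type*} [CommRing R]

lemma mem_midxSet {β : Fin n →₀ ℕ} : β ∈ midxSet n d ↔ 2 ≤ mdeg β ∧ mdeg β ≤ d := by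
  rw [midxSet, Finset.mem_filter, Finset.mem_Iic, and_iff_right_iff_imp]
  rintro ⟨-, hd⟩
  intro i
  calc β i ≤ mdeg β := apply_le_mdeg β i
    _ ≤ d := hd

lemma coeff_univFZ (i : Fin n) (β : Fin n →₀ ℕ) :
    coeff β (univFZ n d i) = coeff β (X i : MvPolynomial (Fin n) (MvPolynomial (Idx n d) ℤ)) +
      (if h : β ∈ midxSet n d then
        (X (⟨i, ⟨β, mem_midxSet.1 h⟩⟩ : Idx n d) : MvPolynomial (Idx n d) ℤ) else 0) := by
  rw [univFZ, coeff_add]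
  congr 1
  rw [coeff_sum]
  by_cases h : β ∈ midxSet n d
  · rw [dif_pos h]
    rw [Finset.sum_eq_single_of_mem (⟨β, h⟩ : {x // x ∈ midxSet n d}) (Finset.mem_attach _ _)]
    · rw [coeff_monomial, if_pos rfl]
    · intro b _ hb
      rw [coeff_monomial, if_neg]
      intro hc
      exact hb (Subtype.ext hc)
  · rw [dif_neg h]
    refine Finset.sum_eq_zero fun b _ => ?_
    rw [coeff_monomial, if_neg]
    intro hc
    rw [← hc] at h
    exact h b.2

lemma affinePartId_univFZ : AffinePartId (univFZ n d) := by
  intro i α hα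
  rw [coeff_univFZ, dif_neg, add_zero]
  intro hc
  have := (mem_midxSet.1 hc).1
  omega

lemma degLE_univFZ (hd : 1 ≤ d) : DegLE (univFZ n d) d := by
  intro i
  rw [univFZ]
  refine le_trans (totalDegree_add _ _) (max_le ?_ ?_)
  · simpa [totalDegree_X] using hd
  · refine le_trans (totalDegree_finset_sum _ _) (Finset.sup_le fun b _ => ?_)
    refine le_trans (totalDegree_monomial_le _ _) ?_
    exact (mem_midxSet.1 b.2).2

lemma psi_X (F : Fin n → MvPolynomial (Fin n) R) (v : Idx n d) :
    psi d F (X v) = coeff v.2.1 (F v.1) := by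
  simp [psi]

lemma map_psi_univ (hd : 2 ≤ d) (F : Fin n → MvPolynomial (Fin n) R)
    (hA : AffinePartId F) (hdeg : DegLE F d) (i : Fin n) :
    MvPolynomial.map (psi d F) (univFZ n d i) = F i := by
  ext β
  rw [coeff_map, coeff_univFZ]
  by_cases h : β ∈ midxSet n d
  · rw [dif_pos h, map_add, psi_X]
    have : coeff β (X i : MvPolynomial (Fin n) (MvPolynomial (Idx n d) ℤ)) = 0 := by
      classical
      rw [coeff_X', if_neg]
      intro hc
      have := (mem_midxSet.1 h).1
      rw [← hc, mdeg_single] at this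
      omega
    rw [this, map_zero, zero_add]
  · rw [dif_neg h, add_zero]
    by_cases h1 : mdeg β ≤ 1
    · classical
      rw [coeff_X', hA i β h1, coeff_X', apply_ite (psi d F), map_one, map_zero]
    · have hgt : d < mdeg β := by
        by_contra hc
        exact h (mem_midxSet.2 ⟨by omega, by omega⟩)
      classical
      rw [coeff_X', if_neg, map_zero]
      · rw [eq_comm]
        apply coeff_eq_zero_of_totalDegree_lt
        calc (F i).totalDegree ≤ d := hdeg i
          _ < mdeg β := hgt
      · intro hc
        rw [← hc, mdeg_single] at h1
        omega

lemma psi_Ecoef (hd : 2 ≤ d) (F : Fin n → MvPolynomial (Fin n) R)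
    (hA : AffinePartId F) (hdeg : DegLE F d) (hK : jacDet F = 1) (β : Fin n →₀ ℕ) :
    psi d F (Ecoef n d β) = 0 := by
  have h1 : psi d F (Ecoef n d β) =
      coeff β (MvPolynomial.map (psi d F) (jacDet (univFZ n d) - 1)) := by
    rw [Ecoef, coeff_map]
  rw [h1, map_sub, map_one]
  have h2 : MvPolynomial.map (psi d F) (jacDet (univFZ n d)) = 1 := by
    rw [← jacDet_map]
    have : (fun i => MvPolynomial.map (psi d F) (univFZ n d i)) = F :=
      funext (map_psi_univ hd F hA hdeg)
    rw [this, hK]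
  rw [h2]
  simp

end AuxD
section AuxE
variable {n d : ℕ}

lemma Ecoef_mem_Jzd (β : Fin n →₀ ℕ) : Ecoef n d β ∈ Jzd n d := by
  rw [Jzd, Ideal.mem_comap]
  exact Ideal.le_radical (Ideal.subset_span ⟨β, rfl⟩)

lemma jacDet_map_eq_one {T : Type*} [CommRing T] (g : MvPolynomial (Idx n d) ℤ →+* T)
    (hg : ∀ β, g (Ecoef n d β) = 0) :
    jacDet (fun i => MvPolynomial.map g (univFZ n d i)) = 1 := by
  rw [jacDet_map]
  have h0 : MvPolynomial.map g (jacDet (univFZ n d) - 1) = 0 := by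
    ext β
    rw [coeff_map, show coeff β (jacDet (univFZ n d) - 1) = Ecoef n d β from rfl, hg β,
      coeff_zero]
  have h1 : MvPolynomial.map g (jacDet (univFZ n d)) - 1 = 0 := by
    rw [← map_one (MvPolynomial.map g), ← map_sub, h0]
  exact sub_eq_zero.1 h1

lemma psi_comp {R S : Type*} [CommRing R] [CommRing S] (f : R →+* S)
    (F : Fin n → MvPolynomial (Fin n) R) :
    psi d (fun i => MvPolynomial.map f (F i)) = f.comp (psi d F) := by
  apply MvPolynomial.ringHom_ext
  · intro r
    simp [psi, map_intCast]
  · intro v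
    simp [psi, coeff_map]

lemma isSKE_of_charZero {R : Type*} [CommRing R] [IsDomain R] [CharZero R]
    (hd : 2 ≤ d) (F : Fin n → MvPolynomial (Fin n) R)
    (hA : AffinePartId F) (hdeg : DegLE F d) (hK : jacDet F = 1) : IsSKE n d F := by
  intro Q hQ
  set K := FractionRing R
  haveI : CharZero K := charZero_of_injective_algebraMap (IsFractionRing.injective R K)
  set ψQ : MvPolynomial (Idx n d) ℚ →+* K :=
    eval₂Hom (algebraMap ℚ K) (fun v => algebraMap R K (coeff v.2.1 (F v.1))) with hψQ
  have hcomp : ψQ.comp (toQ n d) = (algebraMap R K).comp (psi d F) := by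
    apply MvPolynomial.ringHom_ext
    · intro r
      simp [hψQ, toQ, psi, map_intCast]
    · intro v
      simp [hψQ, toQ, psi]
  have hkerp : ((RingHom.ker ψQ : Ideal (MvPolynomial (Idx n d) ℚ))).IsPrime :=
    RingHom.ker_isPrime ψQ
  have hker : (Iqd n d).radical ≤ RingHom.ker ψQ := by
    rw [Ideal.IsPrime.radical_le_iff hkerp, Iqd, Ideal.span_le]
    rintro x ⟨β, rfl⟩
    rw [SetLike.mem_coe, RingHom.mem_ker, ← RingHom.comp_apply, hcomp, RingHom.comp_apply,
      psi_Ecoef hd F hA hdeg hK, map_zero]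
  have h0 : algebraMap R K (psi d F Q) = 0 := by
    rw [← RingHom.comp_apply, ← hcomp, RingHom.comp_apply]
    exact RingHom.mem_ker.1 (hker (Ideal.mem_comap.1 hQ))
  have h1 : algebraMap R K (psi d F Q) = algebraMap R K 0 := by rw [h0, map_zero]
  exact IsFractionRing.injective R K h1

end AuxE
section AuxF
variable {n d : ℕ}

lemma coeff_univFZ_mem (v : Idx n d) : coeff v.2.1 (univFZ n d v.1) = X v := by
  classical
  have hne : ¬(Finsupp.single v.1 1 = v.2.1) := by
    intro hc
    have h2 := v.2.2.1
    rw [← hc, mdeg_single] at h2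
    omega
  rw [coeff_univFZ, dif_pos (mem_midxSet.2 v.2.2), coeff_X', if_neg hne, zero_add]

lemma affinePartId_map {R S : Type*} [CommRing R] [CommRing S] (g : R →+* S)
    {F : Fin n → MvPolynomial (Fin n) R} (hA : AffinePartId F) :
    AffinePartId (fun i => MvPolynomial.map g (F i)) := by
  intro i α hα
  classical
  rw [coeff_map, hA i α hα, coeff_X', coeff_X', apply_ite g, map_one, map_zero]

lemma totalDegree_map_le' {R S : Type*} [CommRing R] [CommRing S] (g : R →+* S)
    (p : MvPolynomial (Fin n) R) :
    (MvPolynomial.map g p).totalDegree ≤ p.totalDegree :=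
  Finset.sup_mono (MvPolynomial.support_map_subset _ _)

lemma jacDet_X {R : Type*} [CommRing R] :
    jacDet (fun i => (X i : MvPolynomial (Fin n) R)) = 1 := by
  classical
  rw [jacDet]
  have h : (Matrix.of fun i j => pderiv j (X i : MvPolynomial (Fin n) R)) = 1 := by
    ext i j
    rcases eq_or_ne i j with rfl | hne
    · simp [Matrix.one_apply]
    · simp [Matrix.one_apply, hne, pderiv_X_of_ne hne]
  rw [h, Matrix.det_one]

end AuxF
/-- Assuming Conjectures 1(2) and 2, for a fixed prime `p`: the Jacobian
Conjecture in characteristic zero (for all n) is equivalent to the strong-Keller Jacobian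
Conjecture over all fields of characteristic `p` (for all n). -/
theorem jc_char_zero_iff_jc_char_p (h12 : Conj1_2) (h2 : Conj2) (p : ℕ) (hp : p.Prime) :
    (∀ (n : ℕ), 1 ≤ n → ∀ (R : Type) [CommRing R] [IsDomain R] [CharZero R],
      ∀ F : Fin n → MvPolynomial (Fin n) R, jacDet F = 1 → IsInvertible F)
    ↔
    (∀ (n : ℕ), 1 ≤ n → ∀ (K : Type) [Field K], CharP K p →
      ∀ F : Fin n → MvPolynomial (Fin n) K,
        AffinePartId F → IsSKEAll n F → IsInvertible F) := by
  constructor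
  · -- char 0 JC implies char p strong JC
    intro H n hn K _ hchar F hA hske
    set R : Type := MvPolynomial K ℤ with hR
    set τ : R →+* K := eval₂Hom (Int.castRingHom K) id with hτ
    have hτsurj : Function.Surjective τ := fun x => ⟨X x, by rw [hτ, eval₂Hom_X']; rfl⟩
    obtain ⟨Fh, hA', hjac, hmap⟩ := h2 n hn R K p hp hchar τ hτsurj F hA hske
    have hinv : IsInvertible Fh := H n hn R Fh hjac
    have hinv2 := isInvertible_map τ hinv
    rwa [show (fun i => MvPolynomial.map τ (Fh i)) = F from funext hmap] at hinv2
  · -- char p strong JC implies char 0 JC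
    intro H n hn R _ _ _ F hK
    obtain ⟨F', hA', hK', hrec⟩ := reduce_to_affineId F hK
    apply hrec
    set d := 2 + Finset.univ.sup (fun i => (F' i).totalDegree) with hd
    have hd2 : 2 ≤ d := Nat.le_add_right 2 _
    have hdeg : DegLE F' d := by
      intro i
      rw [hd]
      exact le_trans (Finset.le_sup (f := fun i => (F' i).totalDegree) (Finset.mem_univ i))
        (Nat.le_add_left _ 2)
    have hSKE : IsSKE n d F' := isSKE_of_charZero hd2 F' hA' hdeg hK'
    set C0 : Type := MvPolynomial (Idx n d) ℤ with hC0
    set J : Ideal C0 := Jzd n d with hJ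
    set GS : Fin n → MvPolynomial (Fin n) (C0 ⧸ J) :=
      fun i => MvPolynomial.map (Ideal.Quotient.mk J) (univFZ n d i) with hGS
    have hGSjac : jacDet GS = 1 :=
      jacDet_map_eq_one (Ideal.Quotient.mk J)
        (fun β => Ideal.Quotient.eq_zero_iff_mem.2 (Ecoef_mem_Jzd β))
    -- a maximal ideal containing J and p
    have hproper : J ⊔ Ideal.span {(p : C0)} ≠ ⊤ := by
      intro htop
      haveI : Fact p.Prime := ⟨hp⟩
      set χ : C0 →+* ZMod p :=
        (Int.castRingHom (ZMod p)).comp (psi d (fun i => (X i : MvPolynomial (Fin n) ℤ)))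
        with hχ
      have hXA : AffinePartId (fun i => (X i : MvPolynomial (Fin n) ℤ)) := fun i α hα => rfl
      have hXdeg : DegLE (fun i => (X i : MvPolynomial (Fin n) ℤ)) d := by
        intro i
        rw [totalDegree_X]
        omega
      have hXSKE : IsSKE n d (fun i => (X i : MvPolynomial (Fin n) ℤ)) :=
        isSKE_of_charZero hd2 _ hXA hXdeg jacDet_X
      have h1 : (1 : C0) ∈ J ⊔ Ideal.span {(p : C0)} := by rw [htop]; trivial
      obtain ⟨y, hy, z, hz, hyz⟩ := Submodule.mem_sup.1 h1
      obtain ⟨c, hc⟩ := Ideal.mem_span_singleton'.1 hz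
      have hz0 : χ 1 = 0 := by
        rw [← hyz, map_add, ← hc, map_mul]
        have hχy : χ y = 0 := by
          rw [hχ, RingHom.comp_apply, hXSKE y hy, map_zero]
        have hχp : χ ((p : C0)) = 0 := by
          rw [map_natCast, ZMod.natCast_self]
        rw [hχy, hχp, mul_zero, add_zero]
      rw [map_one] at hz0
      exact one_ne_zero hz0
    obtain ⟨m, hmMax, hle⟩ := Ideal.exists_le_maximal _ hproper
    haveI := hmMax
    letI : Field (C0 ⧸ m) := Ideal.Quotient.field m
    have hJm : J ≤ m := le_trans le_sup_left hle
    have hpm : ((p : C0)) ∈ m :=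
      hle (Ideal.mem_sup_right (Ideal.subset_span (Set.mem_singleton _)))
    have hpk : ((p : ℕ) : C0 ⧸ m) = 0 := by
      have h0 : Ideal.Quotient.mk m ((p : C0)) = 0 := Ideal.Quotient.eq_zero_iff_mem.2 hpm
      rwa [map_natCast] at h0
    haveI hchk : CharP (C0 ⧸ m) p := by
      have hdvd : ringChar (C0 ⧸ m) ∣ p := ringChar.dvd hpk
      rcases hp.eq_one_or_self_of_dvd _ hdvd with h1 | hp'
      · exact absurd h1 (CharP.char_ne_one (C0 ⧸ m) (ringChar (C0 ⧸ m)))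
      · rw [← hp']
        exact ringChar.charP _
    set τ : (C0 ⧸ J) →+* (C0 ⧸ m) :=
      Ideal.Quotient.lift J (Ideal.Quotient.mk m)
        (fun a ha => Ideal.Quotient.eq_zero_iff_mem.2 (hJm ha)) with hτ
    have hτsurj : Function.Surjective τ := by
      intro x
      obtain ⟨y, rfl⟩ := Ideal.Quotient.mk_surjective x
      exact ⟨Ideal.Quotient.mk J y, Ideal.Quotient.lift_mk _ _ _⟩
    have hcompτ : τ.comp (Ideal.Quotient.mk J) = Ideal.Quotient.mk m :=
      RingHom.ext fun x => by rw [RingHom.comp_apply, hτ, Ideal.Quotient.lift_mk]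
    set f : Fin n → MvPolynomial (Fin n) (C0 ⧸ m) :=
      fun i => MvPolynomial.map (Ideal.Quotient.mk m) (univFZ n d i) with hf
    have hfτ : ∀ i, MvPolynomial.map τ (GS i) = f i := by
      intro i
      rw [hGS, hf, MvPolynomial.map_map, hcompτ]
    have hfA : AffinePartId f := affinePartId_map _ affinePartId_univFZ
    have hfdeg : DegLE f d := fun i =>
      le_trans (totalDegree_map_le' _ _) (degLE_univFZ (by omega) i)
    have hfSKE : IsSKEAll n f := by
      refine ⟨d, hd2, hfdeg, ?_⟩
      intro Q hQ
      have hpsif : psi d f = Ideal.Quotient.mk m := by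
        apply MvPolynomial.ringHom_ext
        · intro r
          rw [eq_intCast (MvPolynomial.C : ℤ →+* C0) r, map_intCast, map_intCast]
        · intro v
          rw [psi_X, hf, coeff_map, coeff_univFZ_mem]
      rw [hpsif]
      exact Ideal.Quotient.eq_zero_iff_mem.2 (hJm hQ)
    have hfinv : IsInvertible f := H n hn (C0 ⧸ m) hchk f hfA hfSKE
    have hfjac : jacDet f = 1 :=
      jacDet_map_eq_one (Ideal.Quotient.mk m)
        (fun β => Ideal.Quotient.eq_zero_iff_mem.2 (hJm (Ecoef_mem_Jzd β)))
    have hGSinv : IsInvertible GS := by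
      apply h12 n hn (C0 ⧸ J) (C0 ⧸ m) τ hτsurj GS hGSjac
      · rwa [show (fun i => MvPolynomial.map τ (GS i)) = f from funext hfτ]
      · rwa [show (fun i => MvPolynomial.map τ (GS i)) = f from funext hfτ]
    set φ : (C0 ⧸ J) →+* R := Ideal.Quotient.lift J (psi d F') (fun a ha => hSKE a ha) with hφ
    have hφcomp : φ.comp (Ideal.Quotient.mk J) = psi d F' :=
      RingHom.ext fun x => by rw [RingHom.comp_apply, hφ, Ideal.Quotient.lift_mk]
    have hφF : (fun i => MvPolynomial.map φ (GS i)) = F' := by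
      funext i
      rw [hGS, MvPolynomial.map_map, hφcomp, map_psi_univ hd2 F' hA' hdeg]
    have hfin := isInvertible_map φ hGSinv
    rwa [hφF] at hfin

end
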